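/- Let M be a non-negative integer, n ≥ 1 an integer, and let x_1,…,x_n be nonzero complex numbers with fixed square roots y_i (y_i^2 = x_i) such that the 2n numbers x_1, x_1^{-1}, …, x_n, x_n^{-1} are pairwise distinct (this guarantees that all denominator determinants below are nonzero). Then (∏_{i=1}^{n}(y_i + y_i^{−1})) · ( s_{(M^n)}(x_1, x_1^{-1}, …, x_n, x_n^{-1}) + s_{(M^{n-1})}(x_1, x_1^{-1}, …, x_n, x_n^{-1}) ) = so_{(((M+1)/2)^n)}(x_1,…,x_n) · o^{even}_{((M/2)^n)}(x_1,…,x_n), where both Schur functions are in the 2n variables x_1, x_1^{-1}, …, x_n, x_n^{-1} (the shape (M^{n-1}) is padded with a final part equal to 0), the shapes (((M+1)/2)^n) and ((M/2)^n) consist of n copies of (M+1)/2 and of M/2 respectively (half-integers when the corresponding numerator is odd), and the characters with half-integer shapes are computed using the y_i. -/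

import Mathlib

open Matrix Finset

/-- The `2n` variables `x₁, x₁⁻¹, x₂, x₂⁻¹, …, xₙ, xₙ⁻¹`. -/
noncomputable def pairVars {n : ℕ} (x : Fin n → ℂ) : Fin (2 * n) → ℂ :=
  fun i =>
    if (i : ℕ) % 2 = 0 then x ⟨(i : ℕ) / 2, by have := i.isLt; omega⟩
    else (x ⟨(i : ℕ) / 2, by have := i.isLt; omega⟩)⁻¹
/-- The Schur function `s_λ(x₁,…,x_N)` as a ratio of determinants,
for an integer shape `lam` (indexed by `Fin N`, i.e. 0-based). -/
noncomputable def schurChar {N : ℕ} (lam : Fin N → ℤ) (x : Fin N → ℂ) : ℂ :=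
  Matrix.det (Matrix.of fun h t : Fin N =>
      x h ^ (lam t + (N : ℤ) - 1 - ((t : ℕ) : ℤ))) /
    Matrix.det (Matrix.of fun h t : Fin N => x h ^ ((N : ℤ) - 1 - ((t : ℕ) : ℤ)))
/-- The odd orthogonal character `so_λ(x₁,…,x_N)` with *doubled* shape
`lam2 = 2·λ` (so that half-integer shapes are allowed), computed from fixed
square roots `y` of the variables (`y i ^ 2 = x i`). -/
noncomputable def soChar2 {N : ℕ} (lam2 : Fin N → ℤ) (y : Fin N → ℂ) : ℂ :=
  Matrix.det (Matrix.of fun h t : Fin N =>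
      y h ^ (lam2 t + 2 * ((N : ℤ) - 1 - ((t : ℕ) : ℤ)) + 1) -
        y h ^ (-(lam2 t + 2 * ((N : ℤ) - 1 - ((t : ℕ) : ℤ)) + 1))) /
    Matrix.det (Matrix.of fun h t : Fin N =>
      y h ^ (2 * ((N : ℤ) - 1 - ((t : ℕ) : ℤ)) + 1) -
        y h ^ (-(2 * ((N : ℤ) - 1 - ((t : ℕ) : ℤ)) + 1)))
/-- The even orthogonal character `o^even_λ(x₁,…,x_N)` with *doubled* shape
`lam2 = 2·λ` (so that half-integer shapes are allowed), computed from fixed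
square roots `y` of the variables (`y i ^ 2 = x i`). -/
noncomputable def oevenChar2 {N : ℕ} (lam2 : Fin N → ℤ) (y : Fin N → ℂ) : ℂ :=
  2 * Matrix.det (Matrix.of fun h t : Fin N =>
      y h ^ (lam2 t + 2 * ((N : ℤ) - 1 - ((t : ℕ) : ℤ))) +
        y h ^ (-(lam2 t + 2 * ((N : ℤ) - 1 - ((t : ℕ) : ℤ))))) /
    Matrix.det (Matrix.of fun h t : Fin N =>
      y h ^ (2 * ((N : ℤ) - 1 - ((t : ℕ) : ℤ))) +
        y h ^ (-(2 * ((N : ℤ) - 1 - ((t : ℕ) : ℤ)))))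

/-!
Regroup the `2n` variables as `y_i ^ {±2}`. After dividing each row by a power of `y_i`, the
Schur numerators and the Schur denominator become determinants of monomials `y_i ^ {±e}` whose
rows for `y_i` and `y_i⁻¹` differ by `e ↦ -e`. Adding and subtracting these paired rows turns a
column `y ^ e` into `(y ^ e + y ^ (-e), y ^ e - y ^ (-e))`. The denominator then splits into a
symmetric and an antisymmetric factor. In the sum of the two numerators the `n`-th column becomes
symmetric, and shifting the columns of the second half by one makes the matrix block triangular,
with the numerators of `o^even_{(M/2)^n}` and `so_{((M+1)/2)^n}` on the diagonal. Finally
`(y + y⁻¹)(y ^ a + y ^ (-a)) = (y ^ (a+1) + y ^ (-a-1)) + (y ^ (a-1) + y ^ (1-a))` relates the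
symmetric factor of the Schur denominator to the denominator of `o^even`.
-/

section BlockDeterminant
variable {ι α β R : Type*} [Fintype ι] [DecidableEq ι] [CommRing R]

theorem Matrix.det_fromBlocks_mul_right_eq (A B D K : Matrix ι ι R) :
    (fromBlocks A B (D * K) D).det = (A - B * K).det * D.det := by
  have h : fromBlocks A B (D * K) D * fromBlocks 1 0 (-K) 1 = fromBlocks (A - B * K) B 0 D := by
    simp [fromBlocks_multiply, sub_eq_add_neg]
  simpa [det_fromBlocks_zero₁₂, det_fromBlocks_zero₂₁] using congrArg det h

theorem Matrix.det_two_smul_mul_det_neg (A B : Matrix ι ι R) :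
    ((2 : R) • A).det * (-B).det = (-2) ^ Fintype.card ι * A.det * B.det := by
  rw [det_smul, det_neg, neg_pow (2 : R)]
  ring

theorem Matrix.det_add_det_eq_det_updateCol {A B : Matrix ι ι R} (j : ι)
    (h : ∀ i k, k ≠ j → A i k = B i k) :
    A.det + B.det = (A.updateCol j fun i => A i j + B i j).det := by
  rw [show (fun i => A i j + B i j) = (fun i => A i j) + (fun i => B i j) from rfl,
    det_updateCol_add]
  congr 2 <;> ext i k <;> by_cases hk : k = j <;> simp [hk, h]

theorem Matrix.det_submatrix_equiv [Fintype α] [DecidableEq α] [Fintype β] [DecidableEq β]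
    (e f : α ≃ β) (A : Matrix β β R) :
    (A.submatrix e f).det = Equiv.Perm.sign (f.trans e.symm) * A.det := by
  have h : A.submatrix e f = (A.submatrix e e).submatrix id (f.trans e.symm) := by
    ext i j
    simp
  rw [h, det_permute', det_submatrix_equiv_self]

theorem Equiv.Perm.intCast_sign_ne_zero {K : Type*} [Field K] [Fintype α] [DecidableEq α]
    (σ : Equiv.Perm α) : ((Equiv.Perm.sign σ : ℤ) : K) ≠ 0 := by
  rcases Int.units_eq_one_or (Equiv.Perm.sign σ) with h | h <;> rw [h] <;> simp

theorem Matrix.det_submatrix_equiv_ne_zero_iff {K : Type*} [Field K] [Fintype α] [DecidableEq α]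
    [Fintype β] [DecidableEq β] (e f : α ≃ β) (A : Matrix β β K) :
    (A.submatrix e f).det ≠ 0 ↔ A.det ≠ 0 := by
  rw [det_submatrix_equiv, mul_ne_zero_iff, and_iff_right (Equiv.Perm.intCast_sign_ne_zero _)]

theorem Matrix.det_div_det_eq_submatrix {K : Type*} [Field K] [Fintype α] [DecidableEq α]
    [Fintype β] [DecidableEq β] (e f : α ≃ β) (A B : Matrix β β K) :
    A.det / B.det = (A.submatrix e f).det / (B.submatrix e f).det := by
  rw [det_submatrix_equiv, det_submatrix_equiv,
    mul_div_mul_left _ _ (Equiv.Perm.intCast_sign_ne_zero _)]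

end BlockDeterminant

section PlusMinus
variable {ι κ K : Type*} [Field K]

def pmVars (z : ι → K) : ι ⊕ ι → K := Sum.elim z fun i => (z i)⁻¹

def pmMatrix (z : ι → K) (e : κ → ℤ) : Matrix (ι ⊕ ι) κ K :=
  of fun r c => pmVars z r ^ e c

def symMatrix (z : ι → K) (e : κ → ℤ) : Matrix ι κ K :=
  of fun i c => z i ^ e c + z i ^ (-e c)

def antiMatrix (z : ι → K) (e : κ → ℤ) : Matrix ι κ K :=
  of fun i c => z i ^ e c - z i ^ (-e c)

theorem symMatrix_neg (z : ι → K) (e : κ → ℤ) : symMatrix z (-e) = symMatrix z e := by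
  ext i c
  simp [symMatrix, add_comm]

theorem antiMatrix_neg (z : ι → K) (e : κ → ℤ) : antiMatrix z (-e) = -antiMatrix z e := by
  ext i c
  simp [antiMatrix]

theorem prod_pmVars_zpow [Fintype ι] {z : ι → K} (hz : ∀ i, z i ≠ 0) (c : ℤ) :
    ∏ r, pmVars z r ^ c = 1 := by
  simp only [pmVars, Fintype.prod_sum_type, Sum.elim_inl, Sum.elim_inr, _root_.inv_zpow]
  rw [prod_inv_distrib]
  exact mul_inv_cancel₀ (prod_ne_zero_iff.2 fun i _ => zpow_ne_zero c (hz i))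

variable [DecidableEq ι]

variable (ι K) in
def sumDiff : Matrix (ι ⊕ ι) (ι ⊕ ι) K := fromBlocks 1 1 1 (-1)

variable [Fintype ι]

@[simp] theorem sumDiff_mul_apply_inl (A : Matrix (ι ⊕ ι) κ K) (i : ι) (c : κ) :
    (sumDiff ι K * A) (.inl i) c = A (.inl i) c + A (.inr i) c := by
  simp [sumDiff, mul_apply, Fintype.sum_sum_type, one_apply]

@[simp] theorem sumDiff_mul_apply_inr (A : Matrix (ι ⊕ ι) κ K) (i : ι) (c : κ) :
    (sumDiff ι K * A) (.inr i) c = A (.inl i) c - A (.inr i) c := by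
  simp [sumDiff, mul_apply, Fintype.sum_sum_type, one_apply, sub_eq_add_neg]

theorem det_sumDiff : (sumDiff ι K).det = (-2) ^ Fintype.card ι := by
  have h : sumDiff ι K = fromBlocks ((2 : K) • 1 + 1 * -1) 1 (-1 * -1) (-1) := by
    rw [sumDiff, two_smul]
    simp
  rw [h, det_fromBlocks_mul_right_eq, add_sub_cancel_right, det_two_smul_mul_det_neg]
  simp

theorem det_eq_of_sumDiff_mul_eq [NeZero (2 : K)] {Y : Matrix (ι ⊕ ι) (ι ⊕ ι) K}
    {P B S L : Matrix ι ι K}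
    (h : sumDiff ι K * Y = fromBlocks ((2 : K) • P + B * L) B (-S * L) (-S)) :
    Y.det = P.det * S.det := by
  have hdet := congrArg det h
  rw [det_mul, det_sumDiff, det_fromBlocks_mul_right_eq, add_sub_cancel_right,
    det_two_smul_mul_det_neg, mul_assoc] at hdet
  exact mul_left_cancel₀ (pow_ne_zero _ (neg_ne_zero.2 two_ne_zero)) hdet

theorem sumDiff_mul_pmMatrix (z : ι → K) (p q : ι → ℤ) :
    sumDiff ι K * pmMatrix z (Sum.elim p q) =
      fromBlocks (symMatrix z p) (symMatrix z q) (antiMatrix z p) (antiMatrix z q) := by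
  ext (i | i) (c | c) <;> simp [pmMatrix, symMatrix, antiMatrix, pmVars, _root_.inv_zpow']

theorem det_pmMatrix_elim_neg [NeZero (2 : K)] (z : ι → K) (b : ι → ℤ) :
    (pmMatrix z (Sum.elim b (-b))).det = (symMatrix z b).det * (antiMatrix z b).det := by
  refine det_eq_of_sumDiff_mul_eq (B := symMatrix z b) (L := -1) ?_
  rw [sumDiff_mul_pmMatrix, symMatrix_neg, antiMatrix_neg, two_smul]
  simp

end PlusMinus

section Shift
variable {ρ K : Type*} [Field K] {m : ℕ}

def shiftMatrix (m : ℕ) : Matrix (Fin (m + 1)) (Fin (m + 1)) K :=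
  of fun s t => if (s : ℕ) = t + 1 then 1 else 0

@[simp] theorem mul_shiftMatrix_apply_castSucc [Fintype ρ] (A : Matrix ρ (Fin (m + 1)) K) (i : ρ)
    (s : Fin m) : (A * (shiftMatrix m : Matrix _ _ K)) i s.castSucc = A i s.succ := by
  rw [mul_apply, Fintype.sum_eq_single s.succ] <;> simp +contextual [shiftMatrix, Fin.ext_iff]

@[simp] theorem mul_shiftMatrix_apply_last [Fintype ρ] (A : Matrix ρ (Fin (m + 1)) K) (i : ρ) :
    (A * (shiftMatrix m : Matrix _ _ K)) i (Fin.last m) = 0 := by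
  rw [mul_apply]
  refine Finset.sum_eq_zero fun s _ => ?_
  rw [shiftMatrix, of_apply, if_neg (by rw [Fin.val_last]; omega), mul_zero]

theorem det_one_add_shiftMatrix_add_single :
    (1 + shiftMatrix m + single (Fin.last m) (Fin.last m) 1 : Matrix _ _ K).det = 2 := by
  rw [det_of_isLowerTriangular]
  · rw [Fin.prod_univ_castSucc]
    simp [shiftMatrix, fun i : Fin m => (Fin.castSucc_ne_last i).symm, one_add_one_eq_two]
  · intro i j (hij : i < j)
    have hshift : (i : ℕ) ≠ j + 1 := by omega
    simp [shiftMatrix, hij.ne, hshift, (hij.trans_le j.le_last).ne']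

theorem sumDiff_mul_pmMatrix_updateCol_last (z : Fin (m + 1) → K) (u v : Fin (m + 1) → ℤ)
    (huv : ∀ s : Fin m, u s.castSucc = v s.succ) :
    sumDiff (Fin (m + 1)) K * (pmMatrix z (Sum.elim u (-v))).updateCol (.inl (Fin.last m))
        (fun r => pmVars z r ^ u (Fin.last m) + pmVars z r ^ (-u (Fin.last m))) =
      fromBlocks ((2 : K) • symMatrix z u + symMatrix z v * -shiftMatrix m) (symMatrix z v)
        (-antiMatrix z v * -shiftMatrix m) (-antiMatrix z v) := by
  ext (i | i) (t | t)
  · induction t using Fin.lastCases with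
    | last =>
      simp only [sumDiff_mul_apply_inl, updateCol_apply, if_true, fromBlocks_apply₁₁,
        Matrix.add_apply, Matrix.smul_apply, Matrix.mul_neg, Matrix.neg_apply,
        mul_shiftMatrix_apply_last]
      simp only [pmVars, Sum.elim_inl, Sum.elim_inr, symMatrix, of_apply, _root_.inv_zpow',
        neg_neg, smul_eq_mul, neg_zero, add_zero]
      ring
    | cast s =>
      simp only [sumDiff_mul_apply_inl, updateCol_apply, fromBlocks_apply₁₁, Matrix.add_apply,
        Matrix.smul_apply, Matrix.mul_neg, Matrix.neg_apply, mul_shiftMatrix_apply_castSucc]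
      simp only [Sum.inl.injEq, Fin.castSucc_ne_last, if_false, pmMatrix, pmVars, of_apply,
        Sum.elim_inl, Sum.elim_inr, huv, symMatrix, smul_eq_mul, _root_.inv_zpow']
      ring
  · simp only [sumDiff_mul_apply_inl, updateCol_apply, fromBlocks_apply₁₂, reduceCtorEq,
      if_false]
    simp [pmMatrix, pmVars, symMatrix, add_comm]
  · induction t using Fin.lastCases with
    | last =>
      simp only [sumDiff_mul_apply_inr, updateCol_apply, if_true, fromBlocks_apply₂₁,
        Matrix.mul_neg, Matrix.neg_mul, neg_neg, mul_shiftMatrix_apply_last]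
      simp only [pmVars, Sum.elim_inl, Sum.elim_inr, _root_.inv_zpow', neg_neg]
      ring
    | cast s =>
      simp only [sumDiff_mul_apply_inr, updateCol_apply, fromBlocks_apply₂₁,
        Matrix.mul_neg, Matrix.neg_mul, neg_neg, mul_shiftMatrix_apply_castSucc]
      simp [pmMatrix, pmVars, antiMatrix, huv, Fin.castSucc_ne_last]
  · simp only [sumDiff_mul_apply_inr, updateCol_apply, fromBlocks_apply₂₂, reduceCtorEq,
      if_false]
    simp [pmMatrix, pmVars, antiMatrix]

/-- Merging the columns of `z ^ u (last m)` and `z ^ (-u (last m))` gives a symmetric column;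
after the row operations `sumDiff`, the column `z ^ (-v (t + 1)) = z ^ (-u t)` cancels the
antisymmetric part of the column `z ^ u t`, which makes the matrix block triangular. -/
theorem det_pmMatrix_add_det_pmMatrix_update_last [NeZero (2 : K)] (z : Fin (m + 1) → K)
    (u v : Fin (m + 1) → ℤ) (huv : ∀ s : Fin m, u s.castSucc = v s.succ) :
    (pmMatrix z (Sum.elim u (-v))).det +
        (pmMatrix z (Sum.elim (Function.update u (Fin.last m) (-u (Fin.last m))) (-v))).det =
      (symMatrix z u).det * (antiMatrix z v).det := by
  rw [det_add_det_eq_det_updateCol (.inl (Fin.last m))]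
  · refine det_eq_of_sumDiff_mul_eq (B := symMatrix z v) (L := -shiftMatrix m) ?_
    convert sumDiff_mul_pmMatrix_updateCol_last z u v huv using 3
    simp only [pmMatrix, of_apply, Sum.elim_inl, Function.update_self]
  · rintro i (t | t) ht
    · have : t ≠ Fin.last m := fun h => ht (congrArg _ h)
      simp only [pmMatrix, of_apply, Sum.elim_inl, Function.update_of_ne this]
    · rfl

theorem add_inv_mul_zpow_add_zpow_neg {z : K} (hz : z ≠ 0) (a : ℤ) :
    (z + z⁻¹) * (z ^ a + z ^ (-a)) =
      (z ^ (a + 1) + z ^ (-(a + 1))) + (z ^ (a - 1) + z ^ (-(a - 1))) := by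
  rw [show -(a + 1) = -a + -1 by ring, show -(a - 1) = -a + 1 by ring, sub_eq_add_neg a 1]
  simp only [zpow_add₀ hz, zpow_one, _root_.zpow_neg_one]
  ring

theorem prod_add_inv_mul_det_symMatrix {z : Fin (m + 1) → K} (hz : ∀ i, z i ≠ 0)
    {d : Fin (m + 1) → ℤ} (hlast : d (Fin.last m) = 0)
    (hstep : ∀ s : Fin m, d s.castSucc = d s.succ + 2) :
    (∏ i, (z i + (z i)⁻¹)) * (symMatrix z d).det = 2 * (symMatrix z (d + 1)).det := by
  have key : diagonal (fun i => z i + (z i)⁻¹) * symMatrix z d =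
      symMatrix z (d + 1) * (1 + shiftMatrix m + single (Fin.last m) (Fin.last m) 1) := by
    ext i t
    rw [diagonal_mul, Matrix.mul_add, Matrix.mul_add, Matrix.mul_one]
    induction t using Fin.lastCases with
    | last =>
      simp only [Matrix.add_apply, mul_shiftMatrix_apply_last, mul_single_apply_same, symMatrix,
        of_apply, Pi.add_apply, Pi.one_apply, hlast, zero_add, neg_zero, zpow_zero, zpow_one,
        _root_.zpow_neg_one]
      ring
    | cast s =>
      simp only [Matrix.add_apply, mul_shiftMatrix_apply_castSucc,
        mul_single_apply_of_ne (hbj := Fin.castSucc_ne_last s), add_zero, symMatrix, of_apply,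
        Pi.add_apply, Pi.one_apply, add_inv_mul_zpow_add_zpow_neg (hz i), hstep]
      ring_nf
  have := congrArg det key
  rwa [det_mul, det_mul, det_diagonal, det_one_add_shiftMatrix_add_single, mul_comm _ 2] at this

end Shift

/-- The exponents `2 (k / 2 + n - 1 - t)` of `oevenChar2 (fun _ => k)`; those of
`soChar2 (fun _ => k)` are one larger. -/
def orthExp (n : ℕ) (k : ℤ) (t : Fin n) : ℤ := k + 2 * ((n : ℤ) - 1 - t)

theorem orthExp_last (m : ℕ) (k : ℤ) : orthExp (m + 1) k (Fin.last m) = k := by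
  simp [orthExp]

theorem orthExp_castSucc (m : ℕ) (k : ℤ) (s : Fin m) :
    orthExp (m + 1) k s.castSucc = orthExp (m + 1) k s.succ + 2 := by
  simp only [orthExp, Fin.val_castSucc, Fin.val_succ]
  push_cast
  ring

theorem soChar2_const {n : ℕ} (k : ℤ) (y : Fin n → ℂ) :
    soChar2 (fun _ => k) y =
      (antiMatrix y (orthExp n k + 1)).det / (antiMatrix y (orthExp n 0 + 1)).det := by
  simp [soChar2, antiMatrix, orthExp]

theorem oevenChar2_const {n : ℕ} (k : ℤ) (y : Fin n → ℂ) :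
    oevenChar2 (fun _ => k) y =
      2 * (symMatrix y (orthExp n k)).det / (symMatrix y (orthExp n 0)).det := by
  simp [oevenChar2, symMatrix, orthExp]

def finSumFinInterleave (n : ℕ) : Fin n ⊕ Fin n ≃ Fin (2 * n) where
  toFun := Sum.elim (fun i => ⟨2 * i, by omega⟩) (fun i => ⟨2 * i + 1, by omega⟩)
  invFun p := if (p : ℕ) % 2 = 0 then .inl ⟨p / 2, by omega⟩ else .inr ⟨p / 2, by omega⟩
  left_inv := by rintro (i | i) <;> simp [Nat.mul_add_div]
  right_inv p := by
    rcases Nat.even_or_odd p with h | h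
    · simp [Nat.even_iff.1 h, Nat.two_mul_div_two_of_even h]
    · simp [Nat.odd_iff.1 h, Nat.two_mul_div_two_add_one_of_odd h]

def finSumFinReflect (n : ℕ) : Fin n ⊕ Fin n ≃ Fin (2 * n) :=
  (Equiv.sumCongr (Equiv.refl _) Fin.revPerm).trans
    (finSumFinEquiv.trans (finCongr (two_mul n).symm))

@[simp] theorem finSumFinReflect_inl_val (n : ℕ) (t : Fin n) :
    (finSumFinReflect n (.inl t) : ℕ) = t := rfl

@[simp] theorem finSumFinReflect_inr_val (n : ℕ) (t : Fin n) :
    (finSumFinReflect n (.inr t) : ℕ) = 2 * n - 1 - t := by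
  simp only [finSumFinReflect, Equiv.trans_apply, Equiv.sumCongr_apply, Sum.map_inr,
    Fin.revPerm_apply, finSumFinEquiv_apply_right, finCongr_apply, Fin.val_cast, Fin.val_natAdd,
    Fin.val_rev]
  omega

theorem pairVars_finSumFinInterleave {n : ℕ} (x : Fin n → ℂ) (r : Fin n ⊕ Fin n) :
    pairVars x (finSumFinInterleave n r) = pmVars x r := by
  rcases r with i | i <;> simp [pairVars, finSumFinInterleave, pmVars, Nat.mul_add_div]

theorem det_submatrix_pairVars_zpow {n : ℕ} {x y : Fin n → ℂ} (hy : ∀ i, y i ^ 2 = x i)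
    (hy0 : ∀ i, y i ≠ 0) (e : Fin (2 * n) → ℤ) (c : ℤ) (f : Fin n ⊕ Fin n → ℤ)
    (hf : ∀ j, 2 * e (finSumFinReflect n j) = f j + c) :
    ((of fun h t => pairVars x h ^ e t).submatrix (finSumFinInterleave n)
      (finSumFinReflect n)).det = (pmMatrix y f).det := by
  have hw : ∀ r, pmVars y r ≠ 0 := by rintro (i | i) <;> simp [pmVars, hy0]
  have hsq : ∀ r, pmVars x r = pmVars y r ^ 2 := by rintro (i | i) <;> simp [pmVars, ← hy]
  have h : (of fun h t => pairVars x h ^ e t).submatrix (finSumFinInterleave n)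
      (finSumFinReflect n) = of fun r j => pmVars y r ^ c * pmMatrix y f r j := by
    ext r j
    rw [submatrix_apply, of_apply, pairVars_finSumFinInterleave, hsq, ← zpow_natCast,
      ← _root_.zpow_mul, Nat.cast_ofNat, hf, add_comm, zpow_add₀ (hw r)]
    rfl
  rw [h, det_mul_column, prod_pmVars_zpow hy0, one_mul]

theorem two_mul_schurDenominatorExp_finSumFinReflect (n : ℕ) (j : Fin n ⊕ Fin n) :
    2 * (((2 * n : ℕ) : ℤ) - 1 - (finSumFinReflect n j : ℕ)) =
      Sum.elim (orthExp n 0 + 1) (-(orthExp n 0 + 1)) j + (2 * n - 1) := by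
  rcases j with t | t <;>
    simp only [finSumFinReflect_inl_val, finSumFinReflect_inr_val, Sum.elim_inl, Sum.elim_inr,
      Pi.add_apply, Pi.neg_apply, Pi.one_apply, orthExp] <;>
    omega

theorem schurChar_pairVars {n : ℕ} {x y : Fin n → ℂ} (hy : ∀ i, y i ^ 2 = x i)
    (hy0 : ∀ i, y i ≠ 0) (lam : Fin (2 * n) → ℤ) (c : ℤ) (f : Fin n ⊕ Fin n → ℤ)
    (hf : ∀ j, 2 * (lam (finSumFinReflect n j) + ((2 * n : ℕ) : ℤ) - 1 -
      (finSumFinReflect n j : ℕ)) = f j + c) :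
    schurChar lam (pairVars x) = (pmMatrix y f).det /
      (pmMatrix y (Sum.elim (orthExp n 0 + 1) (-(orthExp n 0 + 1)))).det := by
  rw [schurChar, det_div_det_eq_submatrix (finSumFinInterleave n) (finSumFinReflect n),
    det_submatrix_pairVars_zpow hy hy0 _ c f hf,
    det_submatrix_pairVars_zpow hy hy0 _ (2 * n - 1) _
      (two_mul_schurDenominatorExp_finSumFinReflect n)]

theorem det_reverse_vandermonde_ne_zero {K : Type*} [Field K] {N : ℕ} {v : Fin N → K}
    (hv : Function.Injective v) :
    (of fun h t : Fin N => v h ^ ((N : ℤ) - 1 - (t : ℕ))).det ≠ 0 := by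
  have h : (of fun h t : Fin N => v h ^ ((N : ℤ) - 1 - (t : ℕ))) =
      (vandermonde v).submatrix (Equiv.refl _) Fin.revPerm := by
    ext h t
    rw [of_apply, submatrix_apply, vandermonde_apply, ← zpow_natCast, Equiv.refl_apply,
      Fin.revPerm_apply, Fin.val_rev]
    congr 1
    omega
  rw [h, det_submatrix_equiv_ne_zero_iff (Equiv.refl _) Fin.revPerm]
  exact det_vandermonde_ne_zero_iff.2 hv

theorem det_pmMatrix_orthExp_ne_zero {n : ℕ} {x y : Fin n → ℂ} (hy : ∀ i, y i ^ 2 = x i)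
    (hy0 : ∀ i, y i ≠ 0) (hinj : Function.Injective (pairVars x)) :
    (pmMatrix y (Sum.elim (orthExp n 0 + 1) (-(orthExp n 0 + 1)))).det ≠ 0 := by
  rw [← det_submatrix_pairVars_zpow hy hy0 (fun t => ((2 * n : ℕ) : ℤ) - 1 - (t : ℕ))
    (2 * n - 1) _ (two_mul_schurDenominatorExp_finSumFinReflect n),
    det_submatrix_equiv_ne_zero_iff]
  exact det_reverse_vandermonde_ne_zero hinj

theorem schurChar_rectangle_add_schurChar_rectangle {m : ℕ} (M : ℕ) {x y : Fin (m + 1) → ℂ}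
    (hy : ∀ i, y i ^ 2 = x i) (hy0 : ∀ i, y i ≠ 0) :
    schurChar (fun t : Fin (2 * (m + 1)) => if (t : ℕ) < m + 1 then (M : ℤ) else 0)
          (pairVars x) +
        schurChar (fun t : Fin (2 * (m + 1)) => if (t : ℕ) < m + 1 - 1 then (M : ℤ) else 0)
          (pairVars x) =
      (symMatrix y (orthExp (m + 1) M)).det * (antiMatrix y (orthExp (m + 1) (M + 1) + 1)).det /
        ((symMatrix y (orthExp (m + 1) 0 + 1)).det *
          (antiMatrix y (orthExp (m + 1) 0 + 1)).det) := by
  rw [schurChar_pairVars hy hy0 _ (M + 2 * (m + 1))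
      (Sum.elim (orthExp (m + 1) M) (-(orthExp (m + 1) (M + 1) + 1))),
    schurChar_pairVars hy hy0 _ (M + 2 * (m + 1))
      (Sum.elim (Function.update (orthExp (m + 1) M) (Fin.last m) (-orthExp (m + 1) M (Fin.last m)))
        (-(orthExp (m + 1) (M + 1) + 1))),
    ← add_div, det_pmMatrix_add_det_pmMatrix_update_last, det_pmMatrix_elim_neg]
  · intro s
    simp only [Pi.add_apply, Pi.one_apply, orthExp, Fin.val_castSucc, Fin.val_succ]
    push_cast
    ring
  · rintro (t | t) <;>
    simp only [finSumFinReflect_inl_val, finSumFinReflect_inr_val, Sum.elim_inl, Sum.elim_inr,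
      Function.update_apply, Fin.ext_iff, Fin.val_last, Pi.add_apply, Pi.neg_apply, Pi.one_apply,
      orthExp] <;>
    split_ifs <;> omega
  · rintro (t | t) <;>
    simp only [finSumFinReflect_inl_val, finSumFinReflect_inr_val, Sum.elim_inl, Sum.elim_inr,
      Pi.add_apply, Pi.neg_apply, Pi.one_apply, orthExp] <;>
    omega

/-- **Identity (6.5).**  For a non-negative integer `M`, an integer `n ≥ 1`,
and nonzero `x₁,…,xₙ` with square roots `y i` of `x i`, such that
`x₁, x₁⁻¹, …, xₙ, xₙ⁻¹` are pairwise distinct,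
`(∏ᵢ (yᵢ + yᵢ⁻¹)) · (s_{(M^n)}(x₁,x₁⁻¹,…) + s_{(M^{n-1})}(x₁,x₁⁻¹,…))
  = so_{(((M+1)/2)^n)}(x₁,…,xₙ) · o^even_{((M/2)^n)}(x₁,…,xₙ)`,
where the (possibly half-integer) shapes are encoded via their doubles. -/
theorem schur_sum_rectangle_uniform_factorization
    (M n : ℕ) (hn : 1 ≤ n) (x y : Fin n → ℂ) (hx : ∀ i, x i ≠ 0)
    (hy : ∀ i, y i ^ 2 = x i)
    (hdist : Function.Injective (pairVars x)) :
    (∏ i, (y i + (y i)⁻¹)) *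
        (schurChar (fun t : Fin (2 * n) => if (t : ℕ) < n then (M : ℤ) else 0)
            (pairVars x) +
          schurChar (fun t : Fin (2 * n) => if (t : ℕ) < n - 1 then (M : ℤ) else 0)
            (pairVars x)) =
      soChar2 (fun _ => (M : ℤ) + 1) y * oevenChar2 (fun _ => (M : ℤ)) y := by
  obtain ⟨m, rfl⟩ : ∃ m, n = m + 1 := ⟨n - 1, by omega⟩
  have hy0 : ∀ i, y i ≠ 0 := fun i h => hx i (by rw [← hy i, h, zero_pow two_ne_zero])
  have hden := det_pmMatrix_orthExp_ne_zero hy hy0 hdist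
  rw [det_pmMatrix_elim_neg, mul_ne_zero_iff] at hden
  have hprod := prod_add_inv_mul_det_symMatrix hy0 (orthExp_last m 0) (orthExp_castSucc m 0)
  have hsym0 : (symMatrix y (orthExp (m + 1) 0)).det ≠ 0 := by
    intro h
    rw [h, mul_zero, zero_eq_mul] at hprod
    exact hden.1 (hprod.resolve_left two_ne_zero)
  rw [schurChar_rectangle_add_schurChar_rectangle M hy hy0, soChar2_const, oevenChar2_const,
    eq_div_of_mul_eq hsym0 hprod]
  field_simp [hden.1, hden.2]
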